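/- For any discrete random variables A, B, C on finite spaces, |J(A; (B,C)) − J(A; B)| ≤ J(A; C | B). -/
import Mathlib


open scoped Classical BigOperators

/-- `μ` is a probability mass function on a finite type. -/
def IsPMF {Ω : Type*} [Fintype Ω] (μ : Ω → ℝ) : Prop :=
  (∀ ω, 0 ≤ μ ω) ∧ ∑ ω, μ ω = 1

/-- Probability that the random variable `X` takes the value `a` under `μ`. -/
noncomputable def pr {Ω α : Type*} [Fintype Ω] (μ : Ω → ℝ) (X : Ω → α) (a : α) : ℝ :=
  ∑ ω, if X ω = a then μ ω else 0

/-- Variational information `J(X;Y)`: total variation distance between the joint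
law of `(X,Y)` and the product of the marginal laws. -/
noncomputable def vinfo {Ω α β : Type*} [Fintype Ω] [Fintype α] [Fintype β]
    (μ : Ω → ℝ) (X : Ω → α) (Y : Ω → β) : ℝ :=
  (1/2) * ∑ a, ∑ b, |pr μ (fun ω => (X ω, Y ω)) (a, b) - pr μ X a * pr μ Y b|

/-- Conditional variational information `J(X;Y|W)`:
`E_W[d_TV(P(X,Y|W), P(X|W)⊗P(Y|W))]`. -/
noncomputable def condVinfo {Ω α β γ : Type*} [Fintype Ω] [Fintype α] [Fintype β] [Fintype γ]
    (μ : Ω → ℝ) (X : Ω → α) (Y : Ω → β) (W : Ω → γ) : ℝ :=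
  (1/2) * ∑ c, ∑ a, ∑ b,
    |pr μ (fun ω => (X ω, Y ω, W ω)) (a, b, c) -
      pr μ (fun ω => (X ω, W ω)) (a, c) * pr μ (fun ω => (Y ω, W ω)) (b, c) / pr μ W c|

section Aux

variable {Ω α β : Type*} [Fintype Ω] [Fintype α] [Fintype β]

lemma pr_nonneg (μ : Ω → ℝ) (h : ∀ ω, 0 ≤ μ ω) (X : Ω → α) (a : α) : 0 ≤ pr μ X a :=
  Finset.sum_nonneg fun ω _ => by by_cases hx : X ω = a <;> simp [hx, h ω]

lemma pr_congr (μ : Ω → ℝ) (X : Ω → α) (Y : Ω → β) (a : α) (b : β)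
    (h : ∀ ω, X ω = a ↔ Y ω = b) : pr μ X a = pr μ Y b :=
  Finset.sum_congr rfl fun ω _ => if_congr (h ω) rfl rfl

lemma pr_marg (μ : Ω → ℝ) (X : Ω → α) (Y : Ω → β) (a : α) :
    ∑ b, pr μ (fun ω => (X ω, Y ω)) (a, b) = pr μ X a := by
  unfold pr
  rw [Finset.sum_comm]
  refine Finset.sum_congr rfl fun ω _ => ?_
  by_cases h : X ω = a <;> simp [Prod.ext_iff, h]

end Aux

/-- Tightness of the chain rule: `|J(A;(B,C)) − J(A;B)| ≤ J(A;C|B)`. -/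
theorem chain_rule_tight₂ {Ω 𝒜 ℬ 𝒞 : Type*} [Fintype Ω] [Fintype 𝒜] [Fintype ℬ] [Fintype 𝒞]
    (μ : Ω → ℝ) (hμ : IsPMF μ) (A : Ω → 𝒜) (B : Ω → ℬ) (C : Ω → 𝒞) :
    |vinfo μ A (fun ω => (B ω, C ω)) - vinfo μ A B| ≤ condVinfo μ A C B := by
  obtain ⟨hpos, _⟩ := hμ
  -- abbreviations
  let pA : 𝒜 → ℝ := fun a => pr μ A a
  let pB : ℬ → ℝ := fun b => pr μ B b
  let pAB : 𝒜 → ℬ → ℝ := fun a b => pr μ (fun ω => (A ω, B ω)) (a, b)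
  let pBC : ℬ → 𝒞 → ℝ := fun b c => pr μ (fun ω => (B ω, C ω)) (b, c)
  let pABC : 𝒜 → ℬ → 𝒞 → ℝ := fun a b c => pr μ (fun ω => (A ω, (B ω, C ω))) (a, (b, c))
  -- rewrite the three quantities as explicit triple sums
  have hvBC : vinfo μ A (fun ω => (B ω, C ω)) =
      (1/2) * ∑ a, ∑ b, ∑ c, |pABC a b c - pA a * pBC b c| := by
    rw [vinfo]
    congr 1
    refine Finset.sum_congr rfl fun a _ => ?_
    rw [Fintype.sum_prod_type]
  have hvB : vinfo μ A B = (1/2) * ∑ a, ∑ b, |pAB a b - pA a * pB b| := rfl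
  have hcond : condVinfo μ A C B =
      (1/2) * ∑ b, ∑ a, ∑ c, |pABC a b c - pAB a b * pBC b c / pB b| := by
    rw [condVinfo]
    congr 1
    refine Finset.sum_congr rfl fun b _ => Finset.sum_congr rfl fun a _ =>
      Finset.sum_congr rfl fun c _ => ?_
    rw [pr_congr μ (fun ω => (A ω, C ω, B ω)) (fun ω => (A ω, (B ω, C ω))) (a, c, b) (a, (b, c))
        (fun ω => by simp [Prod.ext_iff]; tauto),
      pr_congr μ (fun ω => (C ω, B ω)) (fun ω => (B ω, C ω)) (c, b) (b, c)
        (fun ω => by simp [Prod.ext_iff]; tauto)]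
  -- marginal identities
  have hmargC : ∀ a b, ∑ c, pABC a b c = pAB a b := by
    intro a b
    have h1 : ∀ c, pABC a b c = pr μ (fun ω => ((A ω, B ω), C ω)) ((a, b), c) := fun c =>
      pr_congr μ _ _ _ _ (fun ω => by simp [Prod.ext_iff]; tauto)
    simp_rw [h1]
    exact pr_marg μ (fun ω => (A ω, B ω)) C (a, b)
  have hmargBC : ∀ b, ∑ c, pBC b c = pB b := fun b => pr_marg μ B C b
  have hmargA : ∀ b, ∑ a, pAB a b = pB b := by
    intro b
    have h1 : ∀ a, pAB a b = pr μ (fun ω => (B ω, A ω)) (b, a) := fun a =>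
      pr_congr μ _ _ _ _ (fun ω => by simp [Prod.ext_iff]; tauto)
    simp_rw [h1]
    exact pr_marg μ B A b
  have hBCnn : ∀ b c, 0 ≤ pBC b c := fun b c => pr_nonneg μ hpos _ _
  have hABnn : ∀ a b, 0 ≤ pAB a b := fun a b => pr_nonneg μ hpos _ _
  have hBC0 : ∀ b c, pB b = 0 → pBC b c = 0 := by
    intro b c hb
    have := (Finset.sum_eq_zero_iff_of_nonneg (fun c _ => hBCnn b c)).mp
      ((hmargBC b).trans hb)
    exact this c (Finset.mem_univ c)
  have hAB0 : ∀ a b, pB b = 0 → pAB a b = 0 := by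
    intro a b hb
    have := (Finset.sum_eq_zero_iff_of_nonneg (fun a _ => hABnn a b)).mp
      ((hmargA b).trans hb)
    exact this a (Finset.mem_univ a)
  -- key computation: the total mass of the "correction term"
  have key : ∀ a b, ∑ c, |pAB a b * pBC b c / pB b - pA a * pBC b c|
      = |pAB a b - pA a * pB b| := by
    intro a b
    by_cases hb : pB b = 0
    · simp [hb, hAB0 a b hb, fun c => hBC0 b c hb]
    · have hbpos : 0 < pB b := lt_of_le_of_ne (pr_nonneg μ hpos B b) (Ne.symm hb)
      have h1 : ∀ c, pAB a b * pBC b c / pB b - pA a * pBC b c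
          = (pAB a b - pA a * pB b) / pB b * pBC b c := by
        intro c; field_simp
      calc ∑ c, |pAB a b * pBC b c / pB b - pA a * pBC b c|
          = ∑ c, |(pAB a b - pA a * pB b) / pB b| * pBC b c := by
            refine Finset.sum_congr rfl fun c _ => ?_
            rw [h1 c, abs_mul, abs_of_nonneg (hBCnn b c)]
        _ = |(pAB a b - pA a * pB b) / pB b| * pB b := by
            rw [← Finset.mul_sum, hmargBC b]
        _ = |pAB a b - pA a * pB b| := by
            rw [abs_div, abs_of_pos hbpos, div_mul_cancel₀ _ (ne_of_gt hbpos)]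
  -- direction 1: T ≤ S + K
  have hTSK : (∑ a, ∑ b, ∑ c, |pABC a b c - pA a * pBC b c|)
      ≤ (∑ a, ∑ b, |pAB a b - pA a * pB b|)
        + ∑ b, ∑ a, ∑ c, |pABC a b c - pAB a b * pBC b c / pB b| := by
    rw [Finset.sum_comm (s := Finset.univ) (t := Finset.univ)
      (f := fun b a => ∑ c, |pABC a b c - pAB a b * pBC b c / pB b|),
      ← Finset.sum_add_distrib]
    refine Finset.sum_le_sum fun a _ => ?_
    rw [← Finset.sum_add_distrib]
    refine Finset.sum_le_sum fun b _ => ?_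
    rw [← key a b, ← Finset.sum_add_distrib]
    refine Finset.sum_le_sum fun c _ => ?_
    have : pABC a b c - pA a * pBC b c
        = (pABC a b c - pAB a b * pBC b c / pB b)
          + (pAB a b * pBC b c / pB b - pA a * pBC b c) := by ring
    rw [this]
    exact (abs_add_le (pABC a b c - pAB a b * pBC b c / pB b)
      (pAB a b * pBC b c / pB b - pA a * pBC b c)).trans (le_of_eq (add_comm _ _))
  -- direction 2: S ≤ T
  have hST : (∑ a, ∑ b, |pAB a b - pA a * pB b|)
      ≤ ∑ a, ∑ b, ∑ c, |pABC a b c - pA a * pBC b c| := by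
    refine Finset.sum_le_sum fun a _ => Finset.sum_le_sum fun b _ => ?_
    rw [← hmargC a b, ← hmargBC b, Finset.mul_sum, ← Finset.sum_sub_distrib]
    exact Finset.abs_sum_le_sum_abs (fun c => pABC a b c - pA a * pBC b c) Finset.univ
  have hK0 : (0:ℝ) ≤ ∑ b, ∑ a, ∑ c, |pABC a b c - pAB a b * pBC b c / pB b| :=
    Finset.sum_nonneg fun b _ => Finset.sum_nonneg fun a _ =>
      Finset.sum_nonneg fun c _ => abs_nonneg _
  rw [hvBC, hvB, hcond, abs_sub_le_iff]
  constructor <;> linarith
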